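/- arXiv:0708.1487 — 2 statements merged into one kernel-verified Lean document; each statement's English description precedes it below -/
import Mathlib

section
/- Let (g, [,], δ) be a Lie bialgebra, i.e., δ: g → g ⊗ g satisfies the cocycle condition δ([a,b]) = [a⊗1 + 1⊗a, δ(b)] + [δ(a), b⊗1 + 1⊗b]. Then δ has degree 0 with respect to the lower central series filtration: δ(g_i) ⊆ ∑_{p+q=i} g_p ⊗ g_q, where g_0 = g and g_{i+1} = [g_i, g]. -/
/-!
Filter `g ⊗ g` by `T_i = ∑_{p ≤ i} g_p ⊗ g_{i-p}`. The operator `ad2 a` raises this filtration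
by one for every `a`, and `ad2 y` maps all of `g ⊗ g = T_0` into `T_{n+1}` when `y ∈ g_n`.
Since `g_{n+1}` is spanned by the brackets `⁅a, y⁆` with `y ∈ g_n`, the cocycle identity
`δ ⁅a, y⁆ = ad2 a (δ y) - ad2 y (δ a)` gives `δ(g_{n+1}) ⊆ T_{n+1}` by induction on `n`.
-/

open TensorProduct

namespace Stmt5

variable {g : Type*} [LieRing g] [LieAlgebra ℂ g]

/-- The adjoint action of `a ∈ g` on `g ⊗ g`, i.e. `⁅a ⊗ 1 + 1 ⊗ a, ·⁆` (the adjoint action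
on each tensor factor). -/
noncomputable def ad2 (a : g) : Module.End ℂ (g ⊗[ℂ] g) :=
  TensorProduct.map (LieAlgebra.ad ℂ g a) LinearMap.id +
    TensorProduct.map LinearMap.id (LieAlgebra.ad ℂ g a)

/-- The `i`-th term of the lower central series, as a ℂ-submodule of `g`. -/
noncomputable def lcs (i : ℕ) : Submodule ℂ g :=
  (LieModule.lowerCentralSeries ℂ g g i).toSubmodule

section TensorFiltration

variable {R M N : Type*} [CommSemiring R] [AddCommMonoid M] [AddCommMonoid N]
  [Module R M] [Module R N] (F : ℕ → Submodule R M) (G : ℕ → Submodule R N)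

def tensorFiltration (i : ℕ) : Submodule R (M ⊗[R] N) :=
  ⨆ p ∈ Finset.Iic i, LinearMap.range (mapIncl (F p) (G (i - p)))

variable {F G}

theorem tensorFiltration_le_iff {i : ℕ} {S : Submodule R (M ⊗[R] N)} :
    tensorFiltration F G i ≤ S ↔ ∀ p ≤ i, ∀ u ∈ F p, ∀ v ∈ G (i - p), u ⊗ₜ[R] v ∈ S := by
  simp only [tensorFiltration, iSup₂_le_iff, Finset.mem_Iic, range_mapIncl, Submodule.map₂_le,
    mk_apply]

theorem tmul_mem_tensorFiltration (hF : Antitone F) (hG : Antitone G) {i p q : ℕ}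
    (hpq : i ≤ p + q) {u : M} {v : N} (hu : u ∈ F p) (hv : v ∈ G q) :
    u ⊗ₜ[R] v ∈ tensorFiltration F G i := by
  have hmem : u ⊗ₜ[R] v ∈ LinearMap.range (mapIncl (F (min p i)) (G (i - min p i))) := by
    rw [range_mapIncl]
    exact Submodule.apply_mem_map₂ _ (hF (min_le_left p i) hu) (hG (by omega) hv)
  exact Submodule.mem_iSup_of_mem (min p i)
    (Submodule.mem_iSup_of_mem (Finset.mem_Iic.mpr (min_le_right p i)) hmem)

theorem tensorFiltration_zero_eq_top (hF0 : F 0 = ⊤) (hG0 : G 0 = ⊤) :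
    tensorFiltration F G 0 = ⊤ := by
  refine eq_top_iff.mpr (le_trans ?_ (le_iSup₂_of_le 0 (Finset.mem_Iic.mpr le_rfl) le_rfl))
  rw [Nat.sub_self, hF0, hG0, range_mapIncl, ← span_tmul_eq_top, Submodule.span_le]
  rintro _ ⟨u, v, rfl⟩
  exact Submodule.apply_mem_map₂ _ Submodule.mem_top Submodule.mem_top

end TensorFiltration

theorem lcs_antitone : Antitone (lcs (g := g)) :=
  fun _ _ h => LieModule.antitone_lowerCentralSeries ℂ g g h

theorem lcs_zero : lcs (g := g) 0 = ⊤ := rfl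

theorem lcs_succ_eq_span (n : ℕ) :
    lcs (g := g) (n + 1) = Submodule.span ℂ {⁅a, y⁆ | (a : g) (y ∈ lcs (g := g) n)} := by
  rw [lcs, LieModule.lowerCentralSeries_succ, LieSubmodule.lieIdeal_oper_eq_linear_span']
  simp only [LieSubmodule.mem_top, true_and]
  rfl

theorem lie_mem_lcs_succ_of_mem_right (a : g) {u : g} {p : ℕ} (hu : u ∈ lcs (g := g) p) :
    ⁅a, u⁆ ∈ lcs (g := g) (p + 1) := by
  rw [lcs_succ_eq_span]
  exact Submodule.subset_span ⟨a, u, hu, rfl⟩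

theorem lie_mem_lcs_succ_of_mem_left {y : g} {n : ℕ} (hy : y ∈ lcs (g := g) n) (u : g) :
    ⁅y, u⁆ ∈ lcs (g := g) (n + 1) := by
  rw [← lie_skew]
  exact neg_mem (lie_mem_lcs_succ_of_mem_right u hy)

theorem ad2_tmul (a u v : g) : ad2 a (u ⊗ₜ[ℂ] v) = ⁅a, u⁆ ⊗ₜ[ℂ] v + u ⊗ₜ[ℂ] ⁅a, v⁆ := by
  simp [ad2, LieAlgebra.ad_apply]

theorem ad2_mem_tensorFiltration_succ (a : g) {i : ℕ} {t : g ⊗[ℂ] g}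
    (ht : t ∈ tensorFiltration lcs lcs i) : ad2 a t ∈ tensorFiltration lcs lcs (i + 1) := by
  have hle : tensorFiltration lcs lcs i ≤ (tensorFiltration lcs lcs (i + 1)).comap (ad2 a) := by
    refine tensorFiltration_le_iff.mpr fun p hp u hu v hv => ?_
    rw [Submodule.mem_comap, ad2_tmul]
    exact add_mem
      (tmul_mem_tensorFiltration lcs_antitone lcs_antitone (by omega)
        (lie_mem_lcs_succ_of_mem_right a hu) hv)
      (tmul_mem_tensorFiltration lcs_antitone lcs_antitone (by omega)
        hu (lie_mem_lcs_succ_of_mem_right a hv))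
  exact hle ht

theorem ad2_mem_tensorFiltration_of_mem_lcs {n : ℕ} {y : g} (hy : y ∈ lcs (g := g) n)
    (t : g ⊗[ℂ] g) : ad2 y t ∈ tensorFiltration lcs lcs (n + 1) := by
  have ht : t ∈ tensorFiltration lcs lcs 0 :=
    (tensorFiltration_zero_eq_top lcs_zero lcs_zero).ge Submodule.mem_top
  have hle : tensorFiltration lcs lcs 0 ≤ (tensorFiltration lcs lcs (n + 1)).comap (ad2 y) := by
    refine tensorFiltration_le_iff.mpr fun p _ u _ v _ => ?_
    rw [Submodule.mem_comap, ad2_tmul]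
    exact add_mem
      (tmul_mem_tensorFiltration (q := 0) lcs_antitone lcs_antitone le_self_add
        (lie_mem_lcs_succ_of_mem_left hy u) trivial)
      (tmul_mem_tensorFiltration (p := 0) lcs_antitone lcs_antitone le_add_self
        trivial (lie_mem_lcs_succ_of_mem_left hy v))
  exact hle ht

/-- Let `(g, [,], δ)` be a Lie bialgebra, i.e. `δ : g → g ⊗ g` satisfies the
1-cocycle condition `δ([a,b]) = [a⊗1 + 1⊗a, δ(b)] + [δ(a), b⊗1 + 1⊗b]`. Then `δ` has
degree 0 with respect to the lower central series filtration (`g_0 = g`,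
`g_{i+1} = [g_i, g]`): `δ(g_i) ⊆ ∑_{p+q=i} g_p ⊗ g_q`. -/
theorem stmt5 (δ : g →ₗ[ℂ] g ⊗[ℂ] g)
    (hcocycle : ∀ a b : g, δ ⁅a, b⁆ = ad2 a (δ b) - ad2 b (δ a))
    (i : ℕ) (x : g) (hx : x ∈ lcs (g := g) i) :
    δ x ∈ ⨆ p ∈ Finset.Iic i,
      LinearMap.range (TensorProduct.mapIncl (lcs (g := g) p) (lcs (g := g) (i - p))) := by
  change δ x ∈ tensorFiltration lcs lcs i
  induction i generalizing x with
  | zero => exact (tensorFiltration_zero_eq_top lcs_zero lcs_zero).ge Submodule.mem_top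
  | succ n ih =>
    have hspan : lcs (g := g) (n + 1) ≤ (tensorFiltration lcs lcs (n + 1)).comap δ := by
      rw [lcs_succ_eq_span, Submodule.span_le]
      rintro _ ⟨a, y, hy, rfl⟩
      rw [SetLike.mem_coe, Submodule.mem_comap, hcocycle]
      exact sub_mem (ad2_mem_tensorFiltration_succ a (ih y hy))
        (ad2_mem_tensorFiltration_of_mem_lcs hy (δ a))
    exact hspan hx

end Stmt5
end

section
/- Let g be a finite-dimensional Lie algebra over ℂ and r ∈ g ⊗ g a skew-symmetric solution of the classical Yang–Baxter equation [r₁₂, r₁₃] + [r₁₂, r₂₃] + [r₁₃, r₂₃] = 0. Then the image of r, regarded as a linear map g* → g, is a Lie subalgebra of g. -/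
/-!
Let `π : U(g) → g` be a linear left inverse of `ι : g → U(g)`. Contracting the CYBE with
`ξ ⊗ η ⊗ id` after applying `π` on every leg turns its three terms into
`r̃(ξ ∘ ad r̃(τ r) η)`, `r̃(η ∘ ad r̃ ξ)` and `⁅r̃ ξ, r̃ η⁆`. Since `τ r = -r` for the flip `τ`,
this says `⁅r̃ ξ, r̃ η⁆ = r̃(ξ ∘ ad r̃ η - η ∘ ad r̃ ξ)`.

The left inverse exists because `ι` is injective, the degree-one part of the
Poincaré–Birkhoff–Witt theorem. For a well-ordered basis `(x_i)` of `L`, the PBW representation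
of `L` on the polynomial ring with monomials `z_M` (`M` a multiset of indices) is determined by
`x_i • z_M = z_{i + M}` when `i ≤ min M`, and, with `j = min M` otherwise,
`x_i • z_M = x_j • (x_i • z_{M - j}) + ⁅x_i, x_j⁆ • z_{M - j}`. Then `x • 1 = ∑ xⁱ z_i` for
`x = ∑ xⁱ x_i` recovers `x`.
-/

open TensorProduct

namespace Stmt6

variable (g : Type*) [LieRing g] [LieAlgebra ℂ g]

/-- `U(g) ⊗ U(g) ⊗ U(g)`. -/
noncomputable abbrev U3 :=
  UniversalEnvelopingAlgebra ℂ g ⊗[ℂ] (UniversalEnvelopingAlgebra ℂ g ⊗[ℂ]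
    UniversalEnvelopingAlgebra ℂ g)

variable {g}

attribute [local instance] LieRing.ofAssociativeRing

/-- `x ↦ ι(x) ⊗ 1 ⊗ 1 : g → U(g)^{⊗3}`. -/
noncomputable def j1 : g →ₗ[ℂ] U3 g :=
  (TensorProduct.mk ℂ (UniversalEnvelopingAlgebra ℂ g) _).flip (1 ⊗ₜ 1) ∘ₗ
    (UniversalEnvelopingAlgebra.ι ℂ : g →ₗ⁅ℂ⁆ _).toLinearMap

/-- `x ↦ 1 ⊗ ι(x) ⊗ 1 : g → U(g)^{⊗3}`. -/
noncomputable def j2 : g →ₗ[ℂ] U3 g :=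
  TensorProduct.mk ℂ (UniversalEnvelopingAlgebra ℂ g) _ 1 ∘ₗ
    (TensorProduct.mk ℂ (UniversalEnvelopingAlgebra ℂ g) _).flip 1 ∘ₗ
      (UniversalEnvelopingAlgebra.ι ℂ : g →ₗ⁅ℂ⁆ _).toLinearMap

/-- `x ↦ 1 ⊗ 1 ⊗ ι(x) : g → U(g)^{⊗3}`. -/
noncomputable def j3 : g →ₗ[ℂ] U3 g :=
  TensorProduct.mk ℂ (UniversalEnvelopingAlgebra ℂ g) _ 1 ∘ₗ
    TensorProduct.mk ℂ (UniversalEnvelopingAlgebra ℂ g) _ 1 ∘ₗ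
      (UniversalEnvelopingAlgebra.ι ℂ : g →ₗ⁅ℂ⁆ _).toLinearMap

/-- The linear map `g ⊗ g → U(g)^{⊗3}` sending `x ⊗ y ↦ f(x) * f'(y)`. -/
noncomputable def legMap (f f' : g →ₗ[ℂ] U3 g) : g ⊗[ℂ] g →ₗ[ℂ] U3 g :=
  TensorProduct.lift ((LinearMap.mul ℂ (U3 g)).compl₁₂ f f')

/-- `r₁₂ ∈ U(g)^{⊗3}` for `r ∈ g ⊗ g`. -/
noncomputable def r12 (r : g ⊗[ℂ] g) : U3 g := legMap j1 j2 r

/-- `r₁₃ ∈ U(g)^{⊗3}` for `r ∈ g ⊗ g`. -/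
noncomputable def r13 (r : g ⊗[ℂ] g) : U3 g := legMap j1 j3 r

/-- `r₂₃ ∈ U(g)^{⊗3}` for `r ∈ g ⊗ g`. -/
noncomputable def r23 (r : g ⊗[ℂ] g) : U3 g := legMap j2 j3 r

/-- The classical Yang–Baxter equation, stated in `U(g)^{⊗3}`. -/
def CYBE (r : g ⊗[ℂ] g) : Prop :=
  ⁅r12 r, r13 r⁆ + ⁅r12 r, r23 r⁆ + ⁅r13 r, r23 r⁆ = 0

/-- The linear map `g* → g` induced by `r ∈ g ⊗ g`, `ξ ↦ (ξ ⊗ id)(r)`. -/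
noncomputable def rTilde (r : g ⊗[ℂ] g) (ξ : Module.Dual ℂ g) : g :=
  TensorProduct.lid ℂ g (TensorProduct.map ξ LinearMap.id r)

end Stmt6

namespace PBW

section Order

variable {ι : Type*} [LinearOrder ι] {i : ι} {M : Multiset ι}

lemma toFinset_nonempty_of_not_forall_le (h : ¬ ∀ k ∈ M, i ≤ k) : M.toFinset.Nonempty := by
  push Not at h
  obtain ⟨k, hk, -⟩ := h
  exact ⟨k, Multiset.mem_toFinset.mpr hk⟩

lemma min'_toFinset_spec (h : ¬ ∀ k ∈ M, i ≤ k) :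
    let j := M.toFinset.min' (toFinset_nonempty_of_not_forall_le h)
    j ∈ M ∧ (∀ k ∈ M, j ≤ k) ∧ j < i := by
  push Not at h
  obtain ⟨k, hk, hki⟩ := h
  refine ⟨Multiset.mem_toFinset.mp (Finset.min'_mem _ _),
    fun l hl => Finset.min'_le _ _ (Multiset.mem_toFinset.mpr hl), ?_⟩
  exact (Finset.min'_le _ _ (Multiset.mem_toFinset.mpr hk)).trans_lt hki

end Order

section Polynomial

variable (R ι : Type*) [CommRing R]

abbrev Poly := Multiset ι →₀ R

def degLE (d : ℕ) : Submodule R (Poly R ι) :=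
  Finsupp.supported R R {N | Multiset.card N ≤ d}

variable {R ι} {M N : Multiset ι}

noncomputable def monomial (M : Multiset ι) : Poly R ι := Finsupp.single M 1

lemma monomial_mem_degLE {d : ℕ} (h : M.card ≤ d) : monomial M ∈ degLE R ι d :=
  Finsupp.single_mem_supported R 1 h

lemma degLE_mono {d e : ℕ} (h : d ≤ e) : degLE R ι d ≤ degLE R ι e :=
  Finsupp.supported_mono fun _ hN => le_trans hN h

lemma card_le_of_mem_support {d : ℕ} {p : Poly R ι} (hp : p ∈ degLE R ι d) (hN : N ∈ p.support) :
    N.card ≤ d :=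
  (Finsupp.mem_supported R p).mp hp hN

end Polynomial

variable {R L ι : Type*} [CommRing R] [LieRing L] [LieAlgebra R L] [LinearOrder ι]
  (b : Module.Basis ι R L)

/-- The guard `N.card ≤ M.card` always holds (`actMon_mem_degLE`); it only makes the recursion
terminate. -/
noncomputable def actMon [WellFoundedLT ι] (i : ι) (M : Multiset ι) : Poly R ι :=
  if h : ∀ k ∈ M, i ≤ k then monomial (i ::ₘ M)
  else
    let j := M.toFinset.min' (toFinset_nonempty_of_not_forall_le h)
    (actMon i (M.erase j)).sum (fun N c => if N.card ≤ M.card then c • actMon j N else 0) +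
      (b.repr ⁅b i, b j⁆).sum fun k c => c • actMon k (M.erase j)
termination_by toLex (M.card, i)
decreasing_by
  all_goals
    rw [Prod.Lex.toLex_lt_toLex]
    first
    | exact .inl (Multiset.card_erase_lt_of_mem (Multiset.mem_toFinset.mp (Finset.min'_mem _ _)))
    | exact (Nat.lt_or_eq_of_le ‹_›).imp_right fun h' => ⟨h', (min'_toFinset_spec h).2.2⟩

variable [WellFoundedLT ι] {i j : ι} {M N : Multiset ι}

lemma actMon_of_forall_le (h : ∀ k ∈ M, i ≤ k) : actMon b i M = monomial (i ::ₘ M) := by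
  rw [actMon, dif_pos h]

noncomputable def act (i : ι) : Module.End R (Poly R ι) :=
  Finsupp.linearCombination R (actMon b i)

noncomputable def rep : L →ₗ[R] Module.End R (Poly R ι) :=
  b.constr R (act b)

lemma act_apply (p : Poly R ι) : act b i p = p.sum fun N c => c • actMon b i N :=
  Finsupp.linearCombination_apply R p

lemma act_monomial : act b i (monomial M) = actMon b i M := by
  simp [act, monomial]

lemma rep_basis : rep b (b i) = act b i :=
  b.constr_basis R _ i

lemma rep_apply (x : L) (p : Poly R ι) : rep b x p = (b.repr x).sum fun k c => c • act b k p := by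
  simp [rep, Module.Basis.constr_apply, Finsupp.sum, LinearMap.sum_apply]

lemma actMon_mem_degLE (i : ι) (M : Multiset ι) : actMon b i M ∈ degLE R ι (M.card + 1) := by
  induction i, M using actMon.induct with
  | case1 i M h =>
    rw [actMon_of_forall_le b h]
    exact monomial_mem_degLE (by simp)
  | case2 i M h j _ ihN =>
    rename_i ihk
    have hj : j ∈ M := (min'_toFinset_spec h).1
    have hcard : (M.erase j).card + 1 = M.card := Multiset.card_erase_add_one hj
    rw [actMon, dif_neg h]
    refine add_mem (Submodule.finsuppSum_mem _ _ _ _ fun N _ => ?_)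
      (Submodule.finsuppSum_mem _ _ _ _ fun k _ => Submodule.smul_mem _ _ ?_)
    · split_ifs with hN
      · exact Submodule.smul_mem _ _ (degLE_mono (by omega) (ihN N hN))
      · exact zero_mem _
    · exact degLE_mono (by omega) (ihk k)

lemma act_mem_degLE {d : ℕ} {p : Poly R ι} (hp : p ∈ degLE R ι d) :
    act b i p ∈ degLE R ι (d + 1) := by
  rw [act_apply]
  refine Submodule.finsuppSum_mem _ _ _ _ fun N hN => Submodule.smul_mem _ _ ?_
  have := card_le_of_mem_support hp (Finsupp.mem_support_iff.mpr hN)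
  exact degLE_mono (by omega) (actMon_mem_degLE b i N)

lemma rep_mem_degLE (x : L) {d : ℕ} {p : Poly R ι} (hp : p ∈ degLE R ι d) :
    rep b x p ∈ degLE R ι (d + 1) := by
  rw [rep_apply]
  exact Submodule.finsuppSum_mem _ _ _ _ fun k _ => Submodule.smul_mem _ _ (act_mem_degLE b hp)

lemma actMon_of_lt (hj : j ∈ M) (hmin : ∀ k ∈ M, j ≤ k) (hji : j < i) :
    actMon b i M =
      act b j (actMon b i (M.erase j)) + rep b ⁅b i, b j⁆ (monomial (M.erase j)) := by
  have h : ¬ ∀ k ∈ M, i ≤ k := fun h => (h j hj).not_gt hji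
  have hmin' : M.toFinset.min' (toFinset_nonempty_of_not_forall_le h) = j :=
    le_antisymm (Finset.min'_le _ _ (Multiset.mem_toFinset.mpr hj))
      (Finset.le_min' _ _ _ fun k hk => hmin k (Multiset.mem_toFinset.mp hk))
  rw [actMon, dif_neg h]
  simp only [hmin']
  congr 1
  · rw [act_apply]
    refine Finsupp.sum_congr fun N hN => if_pos ?_
    have := card_le_of_mem_support (actMon_mem_degLE b i (M.erase j)) hN
    have := Multiset.card_erase_add_one hj
    omega
  · rw [rep_apply]
    exact Finsupp.sum_congr fun k _ => by rw [act_monomial]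

lemma actMon_sub_monomial_mem_degLE (i : ι) (M : Multiset ι) :
    actMon b i M - monomial (i ::ₘ M) ∈ degLE R ι M.card := by
  induction i, M using actMon.induct with
  | case1 i M h => simp [actMon_of_forall_le b h]
  | case2 i M h j ih =>
    obtain ⟨hj, hmin, hji⟩ := min'_toFinset_spec h
    have hcard := Multiset.card_erase_add_one hj
    have htop : act b j (monomial (i ::ₘ M.erase j)) = monomial (i ::ₘ M) := by
      rw [act_monomial, actMon_of_forall_le b, Multiset.cons_swap, Multiset.cons_erase hj]
      simp only [Multiset.mem_cons, forall_eq_or_imp]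
      exact ⟨hji.le, fun k hk => hmin k (Multiset.mem_of_mem_erase hk)⟩
    have hsplit : actMon b i M - monomial (i ::ₘ M) =
        act b j (actMon b i (M.erase j) - monomial (i ::ₘ M.erase j)) +
          rep b ⁅b i, b j⁆ (monomial (M.erase j)) := by
      rw [actMon_of_lt b hj hmin hji, map_sub, htop]
      abel
    rw [hsplit, ← hcard]
    exact add_mem (act_mem_degLE b ih) (rep_mem_degLE b _ (monomial_mem_degLE le_rfl))

noncomputable def defect : L →ₗ[R] L →ₗ[R] Module.End R (Poly R ι) :=
  LinearMap.mk₂ R (fun x y => rep b x * rep b y - rep b y * rep b x - rep b ⁅x, y⁆)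
    (fun _ _ _ => by simp only [map_add, add_mul, mul_add, add_lie]; abel)
    (fun _ _ _ => by simp only [map_smul, smul_mul_assoc, mul_smul_comm, smul_lie]; module)
    (fun _ _ _ => by simp only [map_add, add_mul, mul_add, lie_add]; abel)
    (fun _ _ _ => by simp only [map_smul, smul_mul_assoc, mul_smul_comm, lie_smul]; module)

lemma defect_apply (x y : L) (p : Poly R ι) :
    defect b x y p = rep b x (rep b y p) - rep b y (rep b x p) - rep b ⁅x, y⁆ p :=
  rfl

lemma rep_rep_of_defect_eq_zero {x y : L} {p : Poly R ι} (h : defect b x y p = 0) :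
    rep b x (rep b y p) = rep b y (rep b x p) + rep b ⁅x, y⁆ p := by
  rw [defect_apply, sub_sub, sub_eq_zero] at h
  exact h

lemma defect_swap (x y : L) : defect b y x = -defect b x y := by
  refine LinearMap.ext fun p => ?_
  rw [defect_apply, LinearMap.neg_apply, defect_apply, ← lie_skew x y, map_neg,
    LinearMap.neg_apply]
  abel

lemma defect_eq_zero_of_basis {s : Set (Multiset ι)}
    (h : ∀ i j, ∀ N ∈ s, defect b (b i) (b j) (monomial N) = 0) (x y : L) {p : Poly R ι}
    (hp : p ∈ Finsupp.supported R R s) : defect b x y p = 0 := by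
  have hbasis : ∀ i j, defect b (b i) (b j) p = 0 := by
    intro i j
    rw [Finsupp.supported_eq_span_single] at hp
    refine (Submodule.span_le (p := LinearMap.ker (defect b (b i) (b j)))).mpr ?_ hp
    rintro _ ⟨N, hN, rfl⟩
    exact h i j N hN
  have : (defect b).compr₂ (LinearMap.applyₗ p) = 0 :=
    b.ext fun i => b.ext fun j => hbasis i j
  exact LinearMap.congr_fun₂ this x y

lemma defect_monomial_of_forall_le {i l : ι} (hli : l < i) (hN : ∀ k ∈ N, l ≤ k) :
    defect b (b i) (b l) (monomial N) = 0 := by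
  have hlN : act b l (monomial N) = monomial (l ::ₘ N) := by
    rw [act_monomial, actMon_of_forall_le b hN]
  have key := actMon_of_lt b (Multiset.mem_cons_self l N)
    (Multiset.forall_mem_cons.mpr ⟨le_rfl, hN⟩) hli
  rw [Multiset.erase_cons_head, ← act_monomial, ← hlN] at key
  rw [defect_apply, rep_basis, rep_basis, key, act_monomial]
  abel

lemma defect_monomial_cons {i j l : ι}
    (hlow : ∀ x y, ∀ p ∈ degLE R ι M.card, defect b x y p = 0)
    (hl : ∀ k ∈ M, l ≤ k) (hlj : l < j) (hji : j < i) :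
    defect b (b i) (b j) (monomial (l ::ₘ M)) = 0 := by
  set w : Poly R ι := monomial M
  have comm := fun x y => rep_rep_of_defect_eq_zero b (hlow x y w (monomial_mem_degLE le_rfl))
  have hlw : rep b (b l) w = monomial (l ::ₘ M) := by
    rw [rep_basis, act_monomial, actMon_of_forall_le b hl]
  have comm_l (a c : ι) (hla : l < a) (hlc : l < c) :
      rep b (b a) (rep b (b l) (rep b (b c) w)) =
        rep b (b l) (rep b (b a) (rep b (b c) w)) + rep b ⁅b a, b l⁆ (rep b (b c) w) := by
    apply rep_rep_of_defect_eq_zero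
    have hsplit : rep b (b c) w = monomial (c ::ₘ M) + (actMon b c M - monomial (c ::ₘ M)) := by
      rw [rep_basis, act_monomial]
      abel
    rw [hsplit, map_add,
      defect_monomial_of_forall_le b hla (Multiset.forall_mem_cons.mpr ⟨hlc.le, hl⟩),
      hlow _ _ _ (actMon_sub_monomial_mem_degLE b c M), add_zero]
  -- The mixed terms are symmetric in `a` and `c`, so they cancel in the commutator.
  have expand (a c : ι) (hla : l < a) (hlc : l < c) :
      rep b (b a) (rep b (b c) (rep b (b l) w)) =
        rep b (b l) (rep b (b a) (rep b (b c) w)) +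
          (rep b ⁅b a, b l⁆ (rep b (b c) w) + rep b ⁅b c, b l⁆ (rep b (b a) w)) +
            rep b ⁅b a, ⁅b c, b l⁆⁆ w := by
    rw [comm (b c) (b l), map_add, comm_l a c hla hlc, comm (b a) ⁅b c, b l⁆]
    abel
  rw [defect_apply, ← hlw, expand i j (hlj.trans hji) hlj, expand j i hlj (hlj.trans hji),
    comm (b i) (b j), comm ⁅b i, b j⁆ (b l), map_add, leibniz_lie (b i) (b j) (b l), map_add,
    LinearMap.add_apply]
  abel

lemma defect_basis_monomial (M : Multiset ι) (i j : ι) :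
    defect b (b i) (b j) (monomial M) = 0 := by
  induction hM : M.card using Nat.strong_induction_on generalizing M i j with
  | _ d ih =>
  wlog hji : j < i generalizing i j
  · rcases (not_lt.mp hji).eq_or_lt with rfl | hij
    · simp [defect_apply]
    · rw [defect_swap, LinearMap.neg_apply, this j i hij, neg_zero]
  by_cases hjM : ∀ k ∈ M, j ≤ k
  · exact defect_monomial_of_forall_le b hji hjM
  obtain ⟨hl, hmin, hlj⟩ := min'_toFinset_spec hjM
  have hcard := Multiset.card_erase_add_one hl
  rw [← Multiset.cons_erase hl]
  refine defect_monomial_cons b (fun x y p hp => defect_eq_zero_of_basis b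
      (fun i j N hN => ih N.card ?_ N i j rfl) x y hp)
    (fun k hk => hmin k (Multiset.mem_of_mem_erase hk)) hlj hji
  have : N.card ≤ _ := hN
  omega

lemma defect_eq_zero : defect b = 0 := by
  refine LinearMap.ext fun x => LinearMap.ext fun y => LinearMap.ext fun p => ?_
  refine defect_eq_zero_of_basis b (s := Set.univ) (fun i j N _ => defect_basis_monomial b N i j)
    x y ?_
  simp

lemma rep_lie (x y : L) : rep b ⁅x, y⁆ = rep b x * rep b y - rep b y * rep b x := by
  have h := LinearMap.congr_fun₂ (defect_eq_zero b) x y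
  rw [defect, LinearMap.mk₂_apply, LinearMap.zero_apply, LinearMap.zero_apply] at h
  exact (sub_eq_zero.mp h).symm

section LieHom

attribute [local instance] LieRing.ofAssociativeRing

noncomputable def repLie : L →ₗ⁅R⁆ Module.End R (Poly R ι) :=
  { rep b with map_lie' := fun {x y} => rep_lie b x y }

lemma repLie_apply (x : L) : repLie b x = rep b x := rfl

end LieHom

lemma rep_apply_monomial_zero (x : L) :
    rep b x (monomial 0) = Finsupp.mapDomain (fun k => {k}) (b.repr x) := by
  rw [rep_apply, Finsupp.mapDomain]
  refine Finsupp.sum_congr fun k _ => ?_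
  rw [act_monomial, actMon_of_forall_le b (by simp), Multiset.cons_zero, monomial,
    Finsupp.smul_single_one]

end PBW

namespace UniversalEnvelopingAlgebra

open PBW

variable {R L κ : Type*} [CommRing R] [LieRing L] [LieAlgebra R L]

theorem exists_leftInverse_ι_of_basis [LinearOrder κ] [WellFoundedLT κ]
    (b : Module.Basis κ R L) :
    ∃ π : UniversalEnvelopingAlgebra R L →ₗ[R] L, ∀ x, π (ι R x) = x := by
  have hinj : Function.Injective fun k : κ => ({k} : Multiset κ) :=
    fun _ _ => Multiset.singleton_inj.mp
  let degreeOne : Poly R κ →ₗ[R] L := b.repr.symm.toLinearMap ∘ₗ Finsupp.lcomapDomain _ hinj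
  refine ⟨degreeOne ∘ₗ LinearMap.applyₗ (monomial 0) ∘ₗ (lift R (repLie b)).toLinearMap,
    fun x => ?_⟩
  simp only [LinearMap.comp_apply, AlgHom.toLinearMap_apply, lift_ι_apply, repLie_apply,
    LinearMap.applyₗ_apply_apply, rep_apply_monomial_zero, degreeOne, LinearEquiv.coe_coe]
  rw [Finsupp.leftInverse_lcomapDomain_mapDomain, b.repr.symm_apply_apply]

theorem exists_leftInverse_ι [Module.Free R L] :
    ∃ π : UniversalEnvelopingAlgebra R L →ₗ[R] L, ∀ x, π (ι R x) = x := by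
  obtain ⟨_, _⟩ := exists_wellFoundedLT (Module.Free.ChooseBasisIndex R L)
  exact exists_leftInverse_ι_of_basis (Module.Free.chooseBasis R L)

end UniversalEnvelopingAlgebra

namespace Stmt6

variable {g : Type*} [LieRing g] [LieAlgebra ℂ g]

attribute [local instance] LieRing.ofAssociativeRing

open UniversalEnvelopingAlgebra

lemma rTilde_tmul (a c : g) (ξ : Module.Dual ℂ g) : rTilde (a ⊗ₜ c) ξ = ξ a • c := by
  simp [rTilde]

lemma rTilde_add (r s : g ⊗[ℂ] g) (ξ : Module.Dual ℂ g) :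
    rTilde (r + s) ξ = rTilde r ξ + rTilde s ξ := by
  simp [rTilde]

lemma rTilde_neg (r : g ⊗[ℂ] g) (ξ : Module.Dual ℂ g) : rTilde (-r) ξ = -rTilde r ξ := by
  simp [rTilde]

lemma rTilde_add_dual (r : g ⊗[ℂ] g) (ξ η : Module.Dual ℂ g) :
    rTilde r (ξ + η) = rTilde r ξ + rTilde r η := by
  simp [rTilde, TensorProduct.map_add_left]

lemma rTilde_neg_dual (r : g ⊗[ℂ] g) (ξ : Module.Dual ℂ g) : rTilde r (-ξ) = -rTilde r ξ := by
  rw [eq_neg_iff_add_eq_zero, ← rTilde_add_dual, neg_add_cancel]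
  simp [rTilde]

lemma rTilde_sub_dual (r : g ⊗[ℂ] g) (ξ η : Module.Dual ℂ g) :
    rTilde r (ξ - η) = rTilde r ξ - rTilde r η := by
  rw [sub_eq_add_neg, rTilde_add_dual, rTilde_neg_dual, sub_eq_add_neg]

lemma legMap_tmul (f f' : g →ₗ[ℂ] U3 g) (a c : g) : legMap f f' (a ⊗ₜ c) = f a * f' c := by
  simp [legMap]

lemma lie_j1_j2_j1_j3 (a b c d : g) :
    ⁅j1 a * j2 b, j1 c * j3 d⁆ = ι ℂ ⁅a, c⁆ ⊗ₜ (ι ℂ b ⊗ₜ ι ℂ d) := by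
  simp [j1, j2, j3, Ring.lie_def, sub_tmul]

lemma lie_j1_j2_j2_j3 (a b c d : g) :
    ⁅j1 a * j2 b, j2 c * j3 d⁆ = ι ℂ a ⊗ₜ (ι ℂ ⁅b, c⁆ ⊗ₜ ι ℂ d) := by
  simp [j1, j2, j3, Ring.lie_def, sub_tmul, tmul_sub]

lemma lie_j1_j3_j2_j3 (a b c d : g) :
    ⁅j1 a * j3 b, j2 c * j3 d⁆ = ι ℂ a ⊗ₜ (ι ℂ c ⊗ₜ ι ℂ ⁅b, d⁆) := by
  simp [j1, j2, j3, Ring.lie_def, tmul_sub]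

noncomputable def contract (π : UniversalEnvelopingAlgebra ℂ g →ₗ[ℂ] g) (ξ η : Module.Dual ℂ g) :
    U3 g →ₗ[ℂ] g :=
  TensorProduct.lift (((LinearMap.lsmul ℂ g).comp (ξ.comp π)).compl₂
    (TensorProduct.lift (((LinearMap.lsmul ℂ g).comp (η.comp π)).compl₂ π)))

variable {π : UniversalEnvelopingAlgebra ℂ g →ₗ[ℂ] g} (ξ η : Module.Dual ℂ g)

lemma contract_tmul_ι (hπ : ∀ x : g, π (ι ℂ x) = x) (a b c : g) :
    contract π ξ η (ι ℂ a ⊗ₜ (ι ℂ b ⊗ₜ ι ℂ c)) = (ξ a * η b) • c := by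
  simp [contract, hπ, mul_smul, smul_comm (η b), -ι_apply]

lemma contract_lie_r12_r13 (hπ : ∀ x : g, π (ι ℂ x) = x) (r r' : g ⊗[ℂ] g) :
    contract π ξ η ⁅r12 r, r13 r'⁆ =
      rTilde r' (ξ ∘ₗ LieAlgebra.ad ℂ g (rTilde (TensorProduct.comm ℂ g g r) η)) := by
  induction r using TensorProduct.induction_on with
  | zero => simp [r12, rTilde]
  | add u v hu hv =>
    simp only [r12] at hu hv ⊢
    rw [map_add, add_lie, map_add, hu, hv, map_add, rTilde_add, map_add, LinearMap.comp_add,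
      rTilde_add_dual]
  | tmul a b =>
    induction r' using TensorProduct.induction_on with
    | zero => simp [r13, rTilde]
    | add u v hu hv =>
      simp only [r13] at hu hv ⊢
      rw [map_add, lie_add, map_add, hu, hv, rTilde_add]
    | tmul c d =>
      rw [r12, r13, legMap_tmul, legMap_tmul, lie_j1_j2_j1_j3, contract_tmul_ι ξ η hπ,
        TensorProduct.comm_tmul, rTilde_tmul, rTilde_tmul]
      simp [mul_comm]

lemma contract_lie_r12_r23 (hπ : ∀ x : g, π (ι ℂ x) = x) (r r' : g ⊗[ℂ] g) :
    contract π ξ η ⁅r12 r, r23 r'⁆ = rTilde r' (η ∘ₗ LieAlgebra.ad ℂ g (rTilde r ξ)) := by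
  induction r using TensorProduct.induction_on with
  | zero => simp [r12, rTilde]
  | add u v hu hv =>
    simp only [r12] at hu hv ⊢
    rw [map_add, add_lie, map_add, hu, hv, rTilde_add, map_add, LinearMap.comp_add,
      rTilde_add_dual]
  | tmul a b =>
    induction r' using TensorProduct.induction_on with
    | zero => simp [r23, rTilde]
    | add u v hu hv =>
      simp only [r23] at hu hv ⊢
      rw [map_add, lie_add, map_add, hu, hv, rTilde_add]
    | tmul c d =>
      rw [r12, r23, legMap_tmul, legMap_tmul, lie_j1_j2_j2_j3, contract_tmul_ι ξ η hπ,
        rTilde_tmul, rTilde_tmul]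
      simp

lemma contract_lie_r13_r23 (hπ : ∀ x : g, π (ι ℂ x) = x) (r r' : g ⊗[ℂ] g) :
    contract π ξ η ⁅r13 r, r23 r'⁆ = ⁅rTilde r ξ, rTilde r' η⁆ := by
  induction r using TensorProduct.induction_on with
  | zero => simp [r13, rTilde]
  | add u v hu hv =>
    simp only [r13] at hu hv ⊢
    rw [map_add, add_lie, map_add, hu, hv, rTilde_add, add_lie]
  | tmul a b =>
    induction r' using TensorProduct.induction_on with
    | zero => simp [r23, rTilde]
    | add u v hu hv =>
      simp only [r23] at hu hv ⊢
      rw [map_add, lie_add, map_add, hu, hv, rTilde_add, lie_add]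
    | tmul c d =>
      rw [r13, r23, legMap_tmul, legMap_tmul, lie_j1_j3_j2_j3, contract_tmul_ι ξ η hπ,
        rTilde_tmul, rTilde_tmul]
      simp [smul_smul, mul_comm]

theorem stmt6_general (r : g ⊗[ℂ] g)
    (hskew : TensorProduct.comm ℂ g g r = -r) (hCYBE : CYBE r) :
    ∀ ξ η : Module.Dual ℂ g, ∃ ζ : Module.Dual ℂ g,
      ⁅rTilde r ξ, rTilde r η⁆ = rTilde r ζ := by
  intro ξ η
  obtain ⟨π, hπ⟩ := exists_leftInverse_ι (R := ℂ) (L := g)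
  refine ⟨ξ ∘ₗ LieAlgebra.ad ℂ g (rTilde r η) - η ∘ₗ LieAlgebra.ad ℂ g (rTilde r ξ), ?_⟩
  have h := congrArg (contract π ξ η) hCYBE
  rw [map_add, map_add, map_zero, contract_lie_r12_r13 ξ η hπ, contract_lie_r12_r23 ξ η hπ,
    contract_lie_r13_r23 ξ η hπ, hskew, rTilde_neg, map_neg, LinearMap.comp_neg,
    rTilde_neg_dual] at h
  rw [rTilde_sub_dual]
  linear_combination (norm := module) h

/-- Let `g` be a finite-dimensional Lie algebra over ℂ and `r ∈ g ⊗ g` a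
skew-symmetric solution of the classical Yang–Baxter equation
`[r₁₂, r₁₃] + [r₁₂, r₂₃] + [r₁₃, r₂₃] = 0` (in `U(g)^{⊗3}`). Then the image of `r`,
regarded as a linear map `g* → g`, is a Lie subalgebra of `g`. -/
theorem stmt6 [Module.Finite ℂ g] (r : g ⊗[ℂ] g)
    (hskew : TensorProduct.comm ℂ g g r = -r) (hCYBE : CYBE r) :
    ∀ ξ η : Module.Dual ℂ g, ∃ ζ : Module.Dual ℂ g,
      ⁅rTilde r ξ, rTilde r η⁆ = rTilde r ζ :=
  stmt6_general r hskew hCYBE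

end Stmt6
end
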